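/- arXiv:2105.10439 — 3 statements merged into one kernel-verified Lean document; each statement's English description precedes it below -/
import Mathlib

section
/- Let Σ be a symmetric positive definite D×D real matrix partitioned into blocks [[X, Y],[Y^T, Z_t]] where Z_t = Z_0 + diag{α_t} with α_t a vector of positive reals each tending to +∞ as t → ∞. Then the inverse Σ_t^{-1} (with Z replaced by Z_t) converges entrywise to the block matrix [[X^{-1}, 0],[0, 0]]. -/
/-!
By the Schur complement formula, the inverse of `[[X, Y], [Yᵀ, Z]]` is a continuous function of
`W = (Z - Yᵀ X⁻¹ Y)⁻¹` which equals `[[X⁻¹, 0], [0, 0]]` at `W = 0`. With `D = diagonal α_t` and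
`M = Z₀ - Yᵀ X⁻¹ Y`, the Schur complement factors as `(M D⁻¹ + 1) D`; since `D⁻¹ → 0`, the first
factor tends to `1`, so `W = D⁻¹ (M D⁻¹ + 1)⁻¹ → 0`.
-/

open Matrix Filter Topology

section BlockInverse

variable {m n R : Type*} [Fintype m] [Fintype n] [DecidableEq m] [DecidableEq n] [CommRing R]

theorem inv_fromBlocks_of_isUnit₁₁ (A : Matrix m m R) (B : Matrix m n R) (C : Matrix n m R)
    (D : Matrix n n R) (hA : IsUnit A) (hS : IsUnit (D - C * A⁻¹ * B)) :
    (fromBlocks A B C D)⁻¹ =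
      fromBlocks (A⁻¹ + A⁻¹ * B * (D - C * A⁻¹ * B)⁻¹ * C * A⁻¹)
        (-(A⁻¹ * B * (D - C * A⁻¹ * B)⁻¹)) (-((D - C * A⁻¹ * B)⁻¹ * C * A⁻¹))
        (D - C * A⁻¹ * B)⁻¹ := by
  let := hA.invertible
  let : Invertible (D - C * ⅟A * B) := by rw [invOf_eq_nonsing_inv]; exact hS.invertible
  let := fromBlocks₁₁Invertible A B C D
  rw [← invOf_eq_nonsing_inv, invOf_fromBlocks₁₁_eq]
  simp only [invOf_eq_nonsing_inv]

variable [TopologicalSpace R] [IsTopologicalRing R] {ι : Type*} {l : Filter ι}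

theorem tendsto_inv_fromBlocks_of_tendsto_inv_schur_zero (A : Matrix m m R) (B : Matrix m n R)
    (C : Matrix n m R) (D : ι → Matrix n n R) (hA : IsUnit A)
    (hS : ∀ᶠ t in l, IsUnit (D t - C * A⁻¹ * B))
    (hS0 : Tendsto (fun t => (D t - C * A⁻¹ * B)⁻¹) l (𝓝 0)) :
    Tendsto (fun t => (fromBlocks A B C (D t))⁻¹) l (𝓝 (fromBlocks A⁻¹ 0 0 0)) := by
  have hcont : Continuous fun W : Matrix n n R =>
      fromBlocks (A⁻¹ + A⁻¹ * B * W * C * A⁻¹) (-(A⁻¹ * B * W)) (-(W * C * A⁻¹)) W := by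
    fun_prop
  have hlim := (hcont.tendsto 0).comp hS0
  simp only [Matrix.mul_zero, Matrix.zero_mul, add_zero, neg_zero] at hlim
  refine hlim.congr' ?_
  filter_upwards [hS] with t ht
  exact (inv_fromBlocks_of_isUnit₁₁ A B C (D t) hA ht).symm

end BlockInverse

section Perturbation

variable {n 𝕜 ι : Type*} [Fintype n] [DecidableEq n] {l : Filter ι}

theorem tendsto_inv_add_of_tendsto_inv_zero [NormedField 𝕜] (M : Matrix n n 𝕜)
    {D : ι → Matrix n n 𝕜} (hD : ∀ᶠ t in l, IsUnit (D t)) (hD0 : Tendsto (fun t => (D t)⁻¹) l (𝓝 0)) :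
    (∀ᶠ t in l, IsUnit (M + D t)) ∧ Tendsto (fun t => (M + D t)⁻¹) l (𝓝 0) := by
  have hE : Tendsto (fun t => M * (D t)⁻¹ + 1) l (𝓝 1) := by
    simpa using (hD0.const_mul M).add_const 1
  have hfac : ∀ᶠ t in l, M + D t = (M * (D t)⁻¹ + 1) * D t := by
    filter_upwards [hD] with t ht
    rw [add_mul, Matrix.mul_assoc, nonsing_inv_mul _ ((isUnit_iff_isUnit_det _).1 ht),
      Matrix.mul_one, Matrix.one_mul]
  have hEunit : ∀ᶠ t in l, IsUnit (M * (D t)⁻¹ + 1) := by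
    have hdet := (continuous_id.matrix_det.tendsto 1).comp hE
    rw [id, det_one] at hdet
    filter_upwards [hdet.eventually_ne one_ne_zero] with t ht
    exact (isUnit_iff_isUnit_det _).2 (isUnit_iff_ne_zero.2 ht)
  have hinv : ContinuousAt Inv.inv (1 : Matrix n n 𝕜) := by
    refine continuousAt_matrix_inv 1 ?_
    rw [det_one, Ring.inverse_eq_inv']
    exact continuousAt_inv₀ one_ne_zero
  refine ⟨?_, ?_⟩
  · filter_upwards [hfac, hEunit, hD] with t ht hEt hDt
    rw [ht]
    exact hEt.mul hDt
  · have hlim := hD0.mul (hinv.tendsto.comp hE)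
    rw [inv_one, Matrix.zero_mul] at hlim
    refine hlim.congr' ?_
    filter_upwards [hfac] with t ht
    rw [ht, Matrix.mul_inv_rev]
    rfl

theorem tendsto_inv_diagonal_of_tendsto_atTop [Field 𝕜] [LinearOrder 𝕜] [IsStrictOrderedRing 𝕜]
    [TopologicalSpace 𝕜] [OrderTopology 𝕜] {α : ι → n → 𝕜}
    (hα : ∀ i, Tendsto (fun t => α t i) l atTop) :
    (∀ᶠ t in l, IsUnit (diagonal (α t))) ∧ Tendsto (fun t => (diagonal (α t))⁻¹) l (𝓝 0) := by
  have hpos : ∀ᶠ t in l, ∀ i, 0 < α t i :=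
    eventually_all.2 fun i => (hα i).eventually_gt_atTop 0
  have hinv : ∀ᶠ t in l, (diagonal (α t))⁻¹ = diagonal (α t)⁻¹ := by
    filter_upwards [hpos] with t ht
    refine inv_eq_left_inv ?_
    rw [diagonal_mul_diagonal, ← diagonal_one]
    exact congrArg diagonal (funext fun i => inv_mul_cancel₀ (ht i).ne')
  refine ⟨?_, ?_⟩
  · filter_upwards [hpos] with t ht
    exact isUnit_diagonal.2 (Pi.isUnit_iff.2 fun i => (ht i).ne'.isUnit)
  · have hlim : Tendsto (fun t => (α t)⁻¹) l (𝓝 0) :=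
      tendsto_pi_nhds.2 fun i => (hα i).inv_tendsto_atTop
    have hdiag : Tendsto (fun t => diagonal (α t)⁻¹) l (𝓝 0) := by
      simpa [Function.comp_def] using (continuous_id.matrix_diagonal.tendsto 0).comp hlim
    exact hdiag.congr' (hinv.mono fun t ht => ht.symm)

end Perturbation

theorem blockMatrix_inverse_limit_general {s u : ℕ}
    (X : Matrix (Fin s) (Fin s) ℝ) (hX : X.PosDef)
    (Y : Matrix (Fin s) (Fin u) ℝ)
    (Z₀ : Matrix (Fin u) (Fin u) ℝ)
    (α : ℕ → Fin u → ℝ)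
    (hα : ∀ i, Tendsto (fun t => α t i) atTop atTop) :
    ∀ i j : Fin s ⊕ Fin u,
      Tendsto (fun t => (Matrix.fromBlocks X Y Yᵀ (Z₀ + Matrix.diagonal (α t)))⁻¹ i j)
        atTop (nhds ((Matrix.fromBlocks X⁻¹ 0 0 0) i j)) := by
  obtain ⟨hDunit, hD0⟩ := tendsto_inv_diagonal_of_tendsto_atTop hα
  obtain ⟨hSunit, hS0⟩ := tendsto_inv_add_of_tendsto_inv_zero (Z₀ - Yᵀ * X⁻¹ * Y) hDunit hD0
  simp only [sub_add_eq_add_sub] at hSunit hS0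
  have hlim := tendsto_inv_fromBlocks_of_tendsto_inv_schur_zero X Y Yᵀ _ hX.isUnit hSunit hS0
  intro i j
  exact tendsto_pi_nhds.1 (tendsto_pi_nhds.1 hlim i) j

/-- **Limit of the SBL covariance under diverging precisions.**  For a symmetric positive
definite block matrix `[[X, Y], [Yᵀ, Z₀ + diag α_t]]` whose bottom-right diagonal precisions
`α_t` all tend to `+∞`, the inverse converges entrywise to `[[X⁻¹, 0], [0, 0]]`. -/
theorem blockMatrix_inverse_limit {s u : ℕ}
    (X : Matrix (Fin s) (Fin s) ℝ) (hX : X.PosDef)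
    (Y : Matrix (Fin s) (Fin u) ℝ)
    (Z₀ : Matrix (Fin u) (Fin u) ℝ) (hZ₀ : Z₀.PosSemidef)
    (α : ℕ → Fin u → ℝ) (hαpos : ∀ t i, 0 < α t i)
    (hα : ∀ i, Tendsto (fun t => α t i) atTop atTop)
    (hPD : ∀ t, (Matrix.fromBlocks X Y Yᵀ (Z₀ + Matrix.diagonal (α t))).PosDef) :
    ∀ i j : Fin s ⊕ Fin u,
      Tendsto (fun t => (Matrix.fromBlocks X Y Yᵀ (Z₀ + Matrix.diagonal (α t)))⁻¹ i j)
        atTop (nhds ((Matrix.fromBlocks X⁻¹ 0 0 0) i j)) :=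
  blockMatrix_inverse_limit_general X hX Y Z₀ α hα
end

section
/- Let Σ̂ be a symmetric positive definite matrix on index set S with Σ̂^{-1} = β Φ_S^T Φ_S + diag{α̂_S}, where β > 0, α̂_S has positive entries, and σ_min(Φ_S) > 0. Then for any j ∈ S and any diagonal matrix Θ with positive entries, sqrt(Σ_{j'≠j} Σ̂_{j,j'}^2) ≤ ‖Θ^{-1} Φ_S^T Φ_S - I‖_2 / (β σ_min(Φ_S)^2), where ‖·‖_2 is the spectral norm. -/
/-!
Put `Ψ = (βΘ + diag α)⁻¹`. The resolvent identity gives `Ψ - Σ̂ = β • Ψ Θ (Θ⁻¹ΦᵀΦ - 1) Σ̂`,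
where `‖ΨΘ‖ ≤ β⁻¹` because `ΨΘ` is diagonal with entries `θᵢ / (βθᵢ + αᵢ)`, and
`‖Σ̂‖ ≤ (βσ²)⁻¹` because `Σ̂⁻¹ = βΦᵀΦ + diag α` is coercive with constant `βσ²`.
Since `Ψ` is diagonal, the off-diagonal part of row `j` of `Σ̂` is part of row `j` of `Σ̂ - Ψ`,
and the Euclidean norm of a row is at most the spectral norm.
-/

open Matrix

/-- The spectral norm (largest singular value) of a square real matrix. -/
noncomputable def specNorm {n : Type*} [Fintype n] [DecidableEq n]
    (A : Matrix n n ℝ) : ℝ :=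
  ‖(Matrix.toEuclideanCLM (𝕜 := ℝ) (n := n) A :
      EuclideanSpace ℝ n →L[ℝ] EuclideanSpace ℝ n)‖

open scoped Matrix.Norms.L2Operator RealInnerProductSpace

theorem specNorm_eq_l2_opNorm {n : Type*} [Fintype n] [DecidableEq n] (A : Matrix n n ℝ) :
    specNorm A = ‖A‖ := rfl

namespace Matrix

variable {m n : Type*}

theorem smul_diagonal_add_diagonal [DecidableEq n] (β : ℝ) (θ α : n → ℝ) :
    β • diagonal θ + diagonal α = diagonal fun i => β * θ i + α i := by
  rw [← diagonal_smul, diagonal_add]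
  rfl

variable [Fintype m] [Fintype n]

theorem dotProduct_transpose_mul_self_mulVec (Φ : Matrix m n ℝ) (v : n → ℝ) :
    v ⬝ᵥ (Φᵀ * Φ) *ᵥ v = ∑ i, (Φ *ᵥ v) i ^ 2 := by
  rw [← mulVec_mulVec, dotProduct_mulVec, vecMul_transpose]
  simp only [dotProduct, sq]

variable [DecidableEq n]

theorem dotProduct_diagonal_mulVec (d v : n → ℝ) :
    v ⬝ᵥ diagonal d *ᵥ v = ∑ i, d i * v i ^ 2 := by
  simp only [mulVec_diagonal, dotProduct]
  exact Finset.sum_congr rfl fun i _ => by ring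

theorem inv_diagonal_of_ne_zero {d : n → ℝ} (hd : ∀ i, d i ≠ 0) :
    (diagonal d)⁻¹ = diagonal d⁻¹ := by
  refine inv_eq_left_inv ?_
  rw [diagonal_mul_diagonal, ← diagonal_one]
  exact congrArg diagonal (funext fun i => inv_mul_cancel₀ (hd i))

theorem sqrt_sum_sq_row_le_l2_opNorm [DecidableEq m] (A : Matrix m n ℝ) (i : m) :
    √(∑ k, A i k ^ 2) ≤ ‖A‖ := by
  have h := l2_opNorm_mulVec Aᴴ (EuclideanSpace.single i 1)
  rw [l2_opNorm_conjTranspose, PiLp.norm_single, norm_one, mul_one] at h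
  convert h using 1
  simp [EuclideanSpace.norm_eq, conjTranspose_eq_transpose_of_trivial]

theorem sqrt_sum_sq_offDiag_row_le (A : Matrix n n ℝ) (d : n → ℝ) (i : n) :
    √(∑ k ∈ Finset.univ.erase i, A i k ^ 2) ≤ ‖A - diagonal d‖ := by
  refine le_trans (Real.sqrt_le_sqrt ?_) (sqrt_sum_sq_row_le_l2_opNorm _ i)
  calc ∑ k ∈ Finset.univ.erase i, A i k ^ 2
      = ∑ k ∈ Finset.univ.erase i, (A - diagonal d) i k ^ 2 :=
        Finset.sum_congr rfl fun k hk => by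
          rw [sub_apply, diagonal_apply_ne _ (Finset.ne_of_mem_erase hk).symm, sub_zero]
    _ ≤ ∑ k, (A - diagonal d) i k ^ 2 :=
        Finset.sum_le_sum_of_subset_of_nonneg (Finset.erase_subset _ _)
          fun _ _ _ => sq_nonneg _

theorem l2_opNorm_diagonal_le {d : n → ℝ} {c : ℝ} (hc : 0 ≤ c) (hd : ∀ i, |d i| ≤ c) :
    ‖diagonal d‖ ≤ c := by
  rw [l2_opNorm_diagonal]
  exact (pi_norm_le_iff_of_nonneg hc).mpr hd

theorem l2_opNorm_inv_smul_diagonal_add_diagonal_mul_le {β : ℝ} (hβ : 0 < β) {θ α : n → ℝ}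
    (hθ : ∀ i, 0 < θ i) (hα : ∀ i, 0 ≤ α i) :
    ‖(β • diagonal θ + diagonal α)⁻¹ * diagonal θ‖ ≤ β⁻¹ := by
  have hpos : ∀ i, 0 < β * θ i + α i := fun i => add_pos_of_pos_of_nonneg (mul_pos hβ (hθ i)) (hα i)
  rw [smul_diagonal_add_diagonal, inv_diagonal_of_ne_zero fun i => (hpos i).ne',
    diagonal_mul_diagonal]
  refine l2_opNorm_diagonal_le (by positivity) fun i => ?_
  rw [Pi.inv_apply, abs_of_pos (mul_pos (inv_pos.mpr (hpos i)) (hθ i)),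
    inv_mul_le_iff₀ (hpos i), le_mul_inv_iff₀ hβ]
  linarith [hα i]

theorem inv_smul_add_sub_inv_smul_add {β : ℝ} {G Θ M : Matrix n n ℝ} (hΘ : IsUnit Θ)
    (hA : IsUnit (β • G + M)) (hD : IsUnit (β • Θ + M)) :
    (β • Θ + M)⁻¹ - (β • G + M)⁻¹ =
      β • ((β • Θ + M)⁻¹ * Θ * (Θ⁻¹ * G - 1) * (β • G + M)⁻¹) := by
  have hsub : β • G + M - (β • Θ + M) = β • (Θ * (Θ⁻¹ * G - 1)) := by
    rw [mul_sub, mul_nonsing_inv_cancel_left _ _ ((isUnit_iff_isUnit_det Θ).mp hΘ), mul_one,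
      smul_sub]
    abel
  rw [inv_sub_inv (iff_of_true hD hA), hsub, mul_smul_comm, smul_mul_assoc, ← mul_assoc]

def IsCoerciveWith (c : ℝ) (A : Matrix n n ℝ) : Prop :=
  ∀ v : n → ℝ, c * ∑ i, v i ^ 2 ≤ v ⬝ᵥ A *ᵥ v

namespace IsCoerciveWith

variable {A : Matrix n n ℝ} {c : ℝ}

theorem mul_norm_le_norm_toEuclideanCLM (hA : A.IsCoerciveWith c) (x : EuclideanSpace ℝ n) :
    c * ‖x‖ ≤ ‖toEuclideanCLM (𝕜 := ℝ) A x‖ := by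
  rcases (norm_nonneg x).eq_or_lt with hx | hx
  · rw [← hx, mul_zero]
    exact norm_nonneg _
  refine le_of_mul_le_mul_right ?_ hx
  calc c * ‖x‖ * ‖x‖ = c * ∑ i, x i ^ 2 := by
        rw [mul_assoc, ← sq, EuclideanSpace.real_norm_sq_eq]
    _ ≤ ⟪x, toEuclideanCLM (𝕜 := ℝ) A x⟫ := by
        rw [inner_toEuclideanCLM]
        exact hA _
    _ ≤ ‖x‖ * ‖toEuclideanCLM (𝕜 := ℝ) A x‖ := real_inner_le_norm _ _
    _ = _ := mul_comm _ _

theorem isUnit (hA : A.IsCoerciveWith c) (hc : 0 < c) : IsUnit A := by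
  rw [isUnit_iff_isUnit_det, isUnit_iff_ne_zero, Ne, ← exists_mulVec_eq_zero_iff]
  rintro ⟨v, hv, hAv⟩
  have h := hA.mul_norm_le_norm_toEuclideanCLM (WithLp.toLp 2 v)
  rw [toEuclideanCLM_toLp, hAv, WithLp.toLp_zero, norm_zero] at h
  exact hv (by simpa using nonpos_of_mul_nonpos_right h hc)

theorem l2_opNorm_inv_le (hA : A.IsCoerciveWith c) (hc : 0 < c) : ‖A⁻¹‖ ≤ c⁻¹ := by
  rw [← l2_opNorm_toEuclideanCLM]
  refine ContinuousLinearMap.opNorm_le_bound _ (inv_nonneg.mpr hc.le) fun y => ?_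
  have hy : toEuclideanCLM (𝕜 := ℝ) A (toEuclideanCLM (𝕜 := ℝ) A⁻¹ y) = y := by
    change (toEuclideanCLM (𝕜 := ℝ) A * toEuclideanCLM (𝕜 := ℝ) A⁻¹) y = y
    rw [← map_mul, mul_nonsing_inv _ ((isUnit_iff_isUnit_det A).mp (hA.isUnit hc)), map_one]
    rfl
  rw [inv_mul_eq_div, le_div_iff₀' hc]
  simpa only [hy] using hA.mul_norm_le_norm_toEuclideanCLM (toEuclideanCLM (𝕜 := ℝ) A⁻¹ y)

end IsCoerciveWith

theorem isCoerciveWith_smul_transpose_mul_self_add_diagonal (Φ : Matrix m n ℝ) {σ β : ℝ}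
    (hσmin : ∀ v : n → ℝ, σ ^ 2 * ∑ j, v j ^ 2 ≤ ∑ i, (Φ *ᵥ v) i ^ 2)
    (hβ : 0 ≤ β) {α : n → ℝ} (hα : ∀ j, 0 ≤ α j) :
    (β • (Φᵀ * Φ) + diagonal α).IsCoerciveWith (β * σ ^ 2) := fun v => by
  rw [add_mulVec, dotProduct_add, smul_mulVec, dotProduct_smul, smul_eq_mul,
    dotProduct_transpose_mul_self_mulVec, dotProduct_diagonal_mulVec, mul_assoc]
  have hdiag : 0 ≤ ∑ j, α j * v j ^ 2 :=
    Finset.sum_nonneg fun j _ => mul_nonneg (hα j) (sq_nonneg _)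
  nlinarith [mul_le_mul_of_nonneg_left (hσmin v) hβ]

end Matrix

/-- **Limiting variance bound for the SBL posterior covariance (Theorem 1, `K = 1`).**
Let `Σ̂ = (β ΦᵀΦ + diag α̂)⁻¹` with `β > 0`, `α̂` positive, and smallest singular value
of `Φ` at least `σ > 0`.  Then for any `j` and any diagonal matrix `Θ = diag θ` with
positive entries, `√(∑_{j'≠j} Σ̂_{j,j'}²) ≤ ‖Θ⁻¹ ΦᵀΦ - I‖₂ / (β σ²)`. -/
theorem sbl_offdiag_row_norm_bound {N m : ℕ}
    (Φ : Matrix (Fin N) (Fin m) ℝ) (σ : ℝ) (hσ : 0 < σ)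
    (hσmin : ∀ v : Fin m → ℝ, σ ^ 2 * (∑ j, (v j) ^ 2) ≤ ∑ i, (Φ.mulVec v i) ^ 2)
    (β : ℝ) (hβ : 0 < β) (α : Fin m → ℝ) (hα : ∀ j, 0 < α j)
    (Sig : Matrix (Fin m) (Fin m) ℝ)
    (hSig : Sig = (β • (Φᵀ * Φ) + Matrix.diagonal α)⁻¹)
    (θ : Fin m → ℝ) (hθ : ∀ j, 0 < θ j) (j : Fin m) :
    Real.sqrt (∑ j' ∈ Finset.univ.erase j, (Sig j j') ^ 2) ≤
      specNorm ((Matrix.diagonal θ)⁻¹ * (Φᵀ * Φ) - 1) / (β * σ ^ 2) := by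
  have hc : 0 < β * σ ^ 2 := by positivity
  have hcoer := isCoerciveWith_smul_transpose_mul_self_add_diagonal Φ hσmin hβ.le
    fun j => (hα j).le
  have hpos : ∀ i, β * θ i + α i ≠ 0 := fun i => by have := hα i; have := hθ i; positivity
  have hΘ : IsUnit (diagonal θ) :=
    isUnit_diagonal.mpr (Pi.isUnit_iff.mpr fun i => (hθ i).ne'.isUnit)
  have hD : IsUnit (β • diagonal θ + diagonal α) := by
    rw [smul_diagonal_add_diagonal]
    exact isUnit_diagonal.mpr (Pi.isUnit_iff.mpr fun i => (hpos i).isUnit)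
  set E := (diagonal θ)⁻¹ * (Φᵀ * Φ) - 1
  rw [specNorm_eq_l2_opNorm]
  calc √(∑ j' ∈ Finset.univ.erase j, Sig j j' ^ 2)
      ≤ ‖Sig - (β • diagonal θ + diagonal α)⁻¹‖ := by
        rw [smul_diagonal_add_diagonal, inv_diagonal_of_ne_zero hpos]
        exact sqrt_sum_sq_offDiag_row_le Sig _ j
    _ = β * ‖(β • diagonal θ + diagonal α)⁻¹ * diagonal θ * E * Sig‖ := by
        rw [norm_sub_rev, hSig, inv_smul_add_sub_inv_smul_add hΘ (hcoer.isUnit hc) hD,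
          norm_smul, Real.norm_of_nonneg hβ.le]
    _ ≤ β * (β⁻¹ * ‖E‖ * (β * σ ^ 2)⁻¹) := by
        grw [norm_mul₃_le, l2_opNorm_inv_smul_diagonal_add_diagonal_mul_le hβ hθ
          fun i => (hα i).le, hSig, hcoer.l2_opNorm_inv_le hc]
    _ = ‖E‖ / (β * σ ^ 2) := by field_simp
end

section
/- Let Φ ∈ R^{N×D} satisfy (d, δ)-RIP with 0 < δ < 1, S a size-d index set, β > 0, α̂_S positive. Define A = β Φ_S^T Φ_S + diag{α̂_S} and the preconditioner M = diag{β·1 + α̂_S} (i.e., θ_j = 1). Then the preconditioned matrix A' = M^{-1/2} A M^{-1/2} satisfies κ(A') ≤ (1+δ)/(1-δ), and consequently 2((√κ(A')-1)/(√κ(A')+1))^U ≤ 2 exp(-U √((1-δ)/(1+δ))) for any U ∈ N. -/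
/-!
Write `M = diag (β + α)`. By RIP, `ΦₛᵀΦₛ - I` has spectral norm at most `δ`, so
`A = M + β (ΦₛᵀΦₛ - I)` has quadratic form within a factor `1 ± δ` of that of `M`, because
`β ≤ β + αⱼ`. Substituting `w = M^{-1/2} v` shows that every Rayleigh quotient, hence every
eigenvalue, of `A'` lies in `[1 - δ, 1 + δ]`, which bounds the ratio of two eigenvalues.
For the rate, `(√κ - 1)/(√κ + 1) ≤ 1 - 1/√κ ≤ exp (-1/√κ)` and `1/√κ ≥ √((1 - δ)/(1 + δ))`.
-/

open Matrix

section QuadraticForms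

variable {m n : Type*} [Fintype m] [Fintype n]

theorem eigenvalue_mem_Icc_of_quadForm_bounds {B : Matrix n n ℝ} {a b η : ℝ} {v : n → ℝ}
    (hv : v ≠ 0) (hBv : B *ᵥ v = η • v)
    (hlo : a * (v ⬝ᵥ v) ≤ v ⬝ᵥ (B *ᵥ v)) (hhi : v ⬝ᵥ (B *ᵥ v) ≤ b * (v ⬝ᵥ v)) :
    a ≤ η ∧ η ≤ b := by
  have hpos : 0 < v ⬝ᵥ v :=
    lt_of_le_of_ne (dotProduct_self_star_nonneg v) (Ne.symm (dotProduct_self_eq_zero.not.mpr hv))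
  rw [hBv, dotProduct_smul, smul_eq_mul] at hlo hhi
  exact ⟨le_of_mul_le_mul_right hlo hpos, le_of_mul_le_mul_right hhi hpos⟩

theorem dotProduct_diagonal_mul_mul_diagonal_mulVec {R : Type*} [CommSemiring R]
    [DecidableEq n] (c v : n → R) (A : Matrix n n R) :
    v ⬝ᵥ ((diagonal c * A * diagonal c) *ᵥ v) = (c * v) ⬝ᵥ (A *ᵥ (c * v)) := by
  have hcv : diagonal c *ᵥ v = c * v := funext (mulVec_diagonal c v)
  have hvc : v ᵥ* diagonal c = c * v :=
    funext fun j => (vecMul_diagonal v c j).trans (mul_comm _ _)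
  rw [← mulVec_mulVec, ← mulVec_mulVec, hcv, dotProduct_mulVec, hvc]

theorem dotProduct_gram_add_diagonal_mulVec {R : Type*} [CommSemiring R] [DecidableEq n]
    (Φ : Matrix m n R) (β : R) (α w : n → R) :
    w ⬝ᵥ ((β • (Φᵀ * Φ) + diagonal α) *ᵥ w) =
      β * ∑ i, (Φ *ᵥ w) i ^ 2 + ∑ j, α j * w j ^ 2 := by
  rw [add_mulVec, dotProduct_add, smul_mulVec, dotProduct_smul, smul_eq_mul, ← mulVec_mulVec,
    dotProduct_mulVec, vecMul_transpose]
  simp only [dotProduct, mulVec_diagonal, sq]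
  congr 1
  exact Finset.sum_congr rfl fun j _ => by ring

theorem quadForm_bounds_of_rip {Φ : Matrix m n ℝ} {δ β : ℝ} {α w : n → ℝ}
    (hδ : 0 ≤ δ) (hβ : 0 ≤ β) (hα : ∀ j, 0 ≤ α j)
    (hlo : (1 - δ) * ∑ j, w j ^ 2 ≤ ∑ i, (Φ *ᵥ w) i ^ 2)
    (hhi : ∑ i, (Φ *ᵥ w) i ^ 2 ≤ (1 + δ) * ∑ j, w j ^ 2) :
    (1 - δ) * ∑ j, (β + α j) * w j ^ 2 ≤ β * ∑ i, (Φ *ᵥ w) i ^ 2 + ∑ j, α j * w j ^ 2 ∧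
      β * ∑ i, (Φ *ᵥ w) i ^ 2 + ∑ j, α j * w j ^ 2 ≤ (1 + δ) * ∑ j, (β + α j) * w j ^ 2 := by
  have hsplit : ∑ j, (β + α j) * w j ^ 2 = β * ∑ j, w j ^ 2 + ∑ j, α j * w j ^ 2 := by
    simp only [add_mul, Finset.sum_add_distrib, Finset.mul_sum]
  have hαw : 0 ≤ ∑ j, α j * w j ^ 2 :=
    Finset.sum_nonneg fun j _ => mul_nonneg (hα j) (sq_nonneg _)
  rw [hsplit]
  constructor <;> nlinarith [mul_le_mul_of_nonneg_left hlo hβ, mul_le_mul_of_nonneg_left hhi hβ,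
    mul_nonneg hδ hαw]

theorem eigenvalue_jacobi_preconditioned_mem_Icc [DecidableEq n] {Φ : Matrix m n ℝ}
    {δ β : ℝ} {α : n → ℝ} (hδ : 0 ≤ δ) (hβ : 0 < β) (hα : ∀ j, 0 ≤ α j)
    (hrip : ∀ w : n → ℝ, (1 - δ) * ∑ j, w j ^ 2 ≤ ∑ i, (Φ *ᵥ w) i ^ 2 ∧
      ∑ i, (Φ *ᵥ w) i ^ 2 ≤ (1 + δ) * ∑ j, w j ^ 2)
    {η : ℝ} {v : n → ℝ} (hv : v ≠ 0)
    (hev : (diagonal (fun j => (√(β + α j))⁻¹) * (β • (Φᵀ * Φ) + diagonal α) *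
      diagonal (fun j => (√(β + α j))⁻¹)) *ᵥ v = η • v) :
    1 - δ ≤ η ∧ η ≤ 1 + δ := by
  set c : n → ℝ := fun j => (√(β + α j))⁻¹
  have hnorm : ∑ j, (β + α j) * (c * v) j ^ 2 = v ⬝ᵥ v := by
    refine Finset.sum_congr rfl fun j _ => ?_
    have hpos : 0 < β + α j := add_pos_of_pos_of_nonneg hβ (hα j)
    simp only [c, Pi.mul_apply, mul_pow, inv_pow, Real.sq_sqrt hpos.le]
    field_simp
  obtain ⟨hlo, hhi⟩ := quadForm_bounds_of_rip hδ hβ.le hα (hrip (c * v)).1 (hrip (c * v)).2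
  rw [hnorm, ← dotProduct_gram_add_diagonal_mulVec, ← dotProduct_diagonal_mul_mul_diagonal_mulVec]
    at hlo hhi
  exact eigenvalue_mem_Icc_of_quadForm_bounds hv hev hlo hhi

end QuadraticForms

theorem cg_factor_pow_le_exp {κ K : ℝ} (hκ : 1 ≤ κ) (hκK : κ ≤ K) (U : ℕ) :
    ((√κ - 1) / (√κ + 1)) ^ U ≤ Real.exp (-U * √K⁻¹) := by
  set s := √κ
  have hs : 1 ≤ s := Real.one_le_sqrt.mpr hκ
  have hfactor : (s - 1) / (s + 1) ≤ Real.exp (-s⁻¹) := by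
    have h : (s - 1) / (s + 1) ≤ 1 - s⁻¹ := by
      rw [div_le_iff₀ (by linarith)]
      field_simp
      nlinarith
    linarith [Real.add_one_le_exp (-s⁻¹)]
  have hK : √K⁻¹ ≤ s⁻¹ := by
    rw [← Real.sqrt_inv]
    exact Real.sqrt_le_sqrt (inv_anti₀ (by linarith) hκK)
  calc ((s - 1) / (s + 1)) ^ U ≤ Real.exp (-s⁻¹) ^ U :=
        pow_le_pow_left₀ (div_nonneg (by linarith) (by linarith)) hfactor U
    _ = Real.exp (-U * s⁻¹) := by rw [← Real.exp_nat_mul]; ring_nf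
    _ ≤ Real.exp (-U * √K⁻¹) := by simp only [neg_mul]; gcongr

/-- **Corollary 4: RIP bound on the preconditioned condition number and the induced CG
rate.**  If `Φ` satisfies `(d, δ)`-RIP with `0 < δ < 1`, `S` has size `d`, and
`A = β Φ_Sᵀ Φ_S + diag α̂` is preconditioned with `M = diag (β + α̂)` (i.e. `θ_j = 1`),
then the condition number of `A' = M^{-1/2} A M^{-1/2}` is at most `(1+δ)/(1-δ)`
(the ratio of any two eigenvalues of `A'` is at most this), and consequently for any `κ`
with `1 ≤ κ ≤ (1+δ)/(1-δ)` and any `U : ℕ`,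
`2 ((√κ - 1)/(√κ + 1))^U ≤ 2 exp (-U √((1-δ)/(1+δ)))`. -/
theorem rip_preconditioned_cg_rate {N D d : ℕ}
    (Φ : Matrix (Fin N) (Fin D) ℝ) (δ : ℝ) (hδ0 : 0 < δ) (hδ1 : δ < 1)
    (hRIP : ∀ C : Finset (Fin D), C.card = d → ∀ v : C → ℝ,
      (1 - δ) * (∑ j, (v j) ^ 2) ≤
          ∑ i, ((Φ.submatrix id (Subtype.val : C → Fin D)).mulVec v i) ^ 2 ∧
      ∑ i, ((Φ.submatrix id (Subtype.val : C → Fin D)).mulVec v i) ^ 2 ≤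
          (1 + δ) * (∑ j, (v j) ^ 2))
    (S : Finset (Fin D)) (hS : S.card = d)
    (β : ℝ) (hβ : 0 < β) (α : S → ℝ) (hα : ∀ j, 0 < α j)
    (A : Matrix S S ℝ)
    (hA : A = β • ((Φ.submatrix id (Subtype.val : S → Fin D))ᵀ *
      (Φ.submatrix id (Subtype.val : S → Fin D))) + Matrix.diagonal α)
    (A' : Matrix S S ℝ)
    (hA' : A' = Matrix.diagonal (fun j => (Real.sqrt (β + α j))⁻¹) * A *
      Matrix.diagonal (fun j => (Real.sqrt (β + α j))⁻¹)) :
    (∀ (η₁ η₂ : ℝ) (v₁ v₂ : S → ℝ), v₁ ≠ 0 → v₂ ≠ 0 →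
      A'.mulVec v₁ = η₁ • v₁ → A'.mulVec v₂ = η₂ • v₂ →
      η₁ / η₂ ≤ (1 + δ) / (1 - δ)) ∧
    (∀ κ : ℝ, 1 ≤ κ → κ ≤ (1 + δ) / (1 - δ) → ∀ U : ℕ,
      2 * ((Real.sqrt κ - 1) / (Real.sqrt κ + 1)) ^ U ≤
        2 * Real.exp (-(U : ℝ) * Real.sqrt ((1 - δ) / (1 + δ)))) := by
  subst hA hA'
  have hspec : ∀ (η : ℝ) (v : S → ℝ), v ≠ 0 → _ → 1 - δ ≤ η ∧ η ≤ 1 + δ :=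
    fun η v hv hev => eigenvalue_jacobi_preconditioned_mem_Icc hδ0.le hβ (fun j => (hα j).le)
      (hRIP S hS) hv hev
  refine ⟨fun η₁ η₂ v₁ v₂ hv₁ hv₂ hev₁ hev₂ => ?_, fun κ hκ hκK U => ?_⟩
  · obtain ⟨-, hη₁⟩ := hspec η₁ v₁ hv₁ hev₁
    obtain ⟨hη₂, -⟩ := hspec η₂ v₂ hv₂ hev₂
    exact div_le_div₀ (by linarith) hη₁ (by linarith) hη₂
  · have hrate := cg_factor_pow_le_exp hκ hκK U
    rw [inv_div] at hrate
    linarith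
end
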